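/- Let p, q, z ∈ ℂ^{n+1} be nonzero with 0 < d(p,q) < π/2 and 0 < d(p,z) < π/2. Then for all sufficiently small t > 0 the point γ_t(p,z) satisfies γ_t(p,z)·ᾱ ≠ 0 and γ_t(p,z)·β̄ ≠ 0, and lim_{t → 0⁺} μ_{p,q}(γ_t(p,z))/t² = (1/2)·(1 − Re( (γ₀'(p,z)·conj(γ₀'(p,q)))² )). -/

import Mathlib

noncomputable section

/-- Hermitian product `w·z̄ = Σᵢ wⁱ·conj(zⁱ)` on `ℂ^m`. -/
def herm {m : ℕ} (w z : EuclideanSpace ℂ (Fin m)) : ℂ :=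
  ∑ i, w i * (starRingEnd ℂ) (z i)

/-- Fubini–Study distance between (the projective classes of) `p` and `q`. -/
def fsDist {m : ℕ} (p q : EuclideanSpace ℂ (Fin m)) : ℝ :=
  Real.arccos (‖herm p q‖ / (‖p‖ * ‖q‖))

/-- Initial velocity `γ₀'(p,q)` of the geodesic from `[p]` to `[q]`. -/
def gammaDir {m : ℕ} (p q : EuclideanSpace ℂ (Fin m)) : EuclideanSpace ℂ (Fin m) :=
  (Real.cot (fsDist p q) : ℂ) • (((‖p‖ : ℂ) / herm q p) • q - (‖p‖ : ℂ)⁻¹ • p)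

/-- The geodesic `γ_t(p,q) = cos t·(p/|p|) + sin t·γ₀'(p,q)`. -/
def geo {m : ℕ} (t : ℝ) (p q : EuclideanSpace ℂ (Fin m)) : EuclideanSpace ℂ (Fin m) :=
  (Real.cos t : ℂ) • ((‖p‖ : ℂ)⁻¹ • p) + (Real.sin t : ℂ) • gammaDir p q

/-- The velocity `γ_t'(p,q) = −sin t·(p/|p|) + cos t·γ₀'(p,q)`. -/
def geoVel {m : ℕ} (t : ℝ) (p q : EuclideanSpace ℂ (Fin m)) : EuclideanSpace ℂ (Fin m) :=
  (-(Real.sin t) : ℂ) • ((‖p‖ : ℂ)⁻¹ • p) + (Real.cos t : ℂ) • gammaDir p q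

/-- `α = (p/|p| + i·γ₀'(p,q))/√2`. -/
def alphaV {m : ℕ} (p q : EuclideanSpace ℂ (Fin m)) : EuclideanSpace ℂ (Fin m) :=
  ((Real.sqrt 2 : ℂ))⁻¹ • ((‖p‖ : ℂ)⁻¹ • p + Complex.I • gammaDir p q)

/-- `β = (p/|p| − i·γ₀'(p,q))/√2`. -/
def betaV {m : ℕ} (p q : EuclideanSpace ℂ (Fin m)) : EuclideanSpace ℂ (Fin m) :=
  ((Real.sqrt 2 : ℂ))⁻¹ • ((‖p‖ : ℂ)⁻¹ • p - Complex.I • gammaDir p q)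

/-- `μ_{p,q}(z) = −(1/2)·log(2·|z·ᾱ|·|z·β̄|/|z|²)`. -/
def muW {m : ℕ} (p q z : EuclideanSpace ℂ (Fin m)) : ℝ :=
  -(1 / 2 : ℝ) * Real.log (2 * ‖herm z (alphaV p q)‖ *
    ‖herm z (betaV p q)‖ / ‖z‖ ^ 2)

/-! With `u = p/|p|`, both `γ₀'(p,q)` and `γ₀'(p,z)` are orthogonal to `u`, and `γ₀'(p,z)` is a
unit vector. Hence `γ_t(p,z) = cos t·u + sin t·γ₀'(p,z)` is a unit vector and, writing
`a = γ₀'(p,z)·conj(γ₀'(p,q))`, one gets `(γ_t·ᾱ)(γ_t·β̄) = (1 + sin²t·(a² − 1))/2`, so that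
`μ_{p,q}(γ_t(p,z)) = −½·log|1 + sin²t·(a² − 1)|`. As `log|1 + s·c| = s·Re c + o(s)` and
`sin²t ~ t²`, the quotient by `t²` tends to `−½·Re(a² − 1)`. -/

open scoped InnerProductSpace
open Filter Topology

section Frame

variable {E : Type*} [NormedAddCommGroup E] [InnerProductSpace ℂ E]

lemma norm_inv_norm_smul_self {x : E} (hx : x ≠ 0) : ‖(‖x‖ : ℂ)⁻¹ • x‖ = 1 := by
  simpa using norm_smul_inv_norm (𝕜 := ℂ) hx

lemma norm_cos_smul_add_sin_smul {u w : E} (hu : ‖u‖ = 1) (hw : ‖w‖ = 1)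
    (huw : ⟪u, w⟫_ℂ = 0) (t : ℝ) :
    ‖(Real.cos t : ℂ) • u + (Real.sin t : ℂ) • w‖ = 1 := by
  have horth : ⟪(Real.cos t : ℂ) • u, (Real.sin t : ℂ) • w⟫_ℂ = 0 := by
    simp [huw]
  have hsq := norm_add_sq_eq_norm_sq_add_norm_sq_of_inner_eq_zero _ _ horth
  simp only [norm_smul, hu, hw, Complex.norm_real, Real.norm_eq_abs, mul_one, ← sq, sq_abs,
    Real.cos_sq_add_sin_sq] at hsq
  exact (pow_eq_one_iff_of_nonneg (norm_nonneg _) two_ne_zero).mp hsq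

lemma inner_add_I_smul_mul_inner_sub_I_smul {u v w : E} (hu : ‖u‖ = 1)
    (huv : ⟪u, v⟫_ℂ = 0) (huw : ⟪u, w⟫_ℂ = 0) (t : ℝ) :
    ⟪((Real.sqrt 2 : ℂ))⁻¹ • (u + Complex.I • v),
        (Real.cos t : ℂ) • u + (Real.sin t : ℂ) • w⟫_ℂ *
      ⟪((Real.sqrt 2 : ℂ))⁻¹ • (u - Complex.I • v),
        (Real.cos t : ℂ) • u + (Real.sin t : ℂ) • w⟫_ℂ =
      (1 + (Real.sin t : ℂ) ^ 2 * (⟪v, w⟫_ℂ ^ 2 - 1)) / 2 := by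
  have hvu : ⟪v, u⟫_ℂ = 0 := by rw [← inner_conj_symm, huv, map_zero]
  have huu : ⟪u, u⟫_ℂ = 1 := by rw [inner_self_eq_norm_sq_to_K, hu]; norm_num
  have hsqrt : ((Real.sqrt 2 : ℂ)) ^ 2 = 2 := by
    rw [← Complex.ofReal_pow, Real.sq_sqrt zero_le_two]; norm_num
  have hcs : (Real.cos t : ℂ) ^ 2 + (Real.sin t : ℂ) ^ 2 = 1 := by
    exact_mod_cast Real.cos_sq_add_sin_sq t
  have h2 : ((Real.sqrt 2 : ℂ)) ≠ 0 := by
    exact_mod_cast (Real.sqrt_pos.mpr two_pos).ne'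
  simp only [inner_smul_left, inner_add_left, inner_sub_left, inner_add_right,
    inner_smul_right, huu, huw, hvu, map_inv₀, Complex.conj_ofReal, Complex.conj_I]
  field_simp
  linear_combination (-2 * (Real.sin t : ℂ) ^ 2 * ⟪v, w⟫_ℂ ^ 2) * Complex.I_sq
    + ((Real.sin t : ℂ) ^ 2 - 1 - (Real.sin t : ℂ) ^ 2 * ⟪v, w⟫_ℂ ^ 2) * hsqrt + 2 * hcs

end Frame

lemma hasDerivAt_log_norm_one_add_mul (c : ℂ) :
    HasDerivAt (fun s : ℝ => Real.log ‖1 + s * c‖) c.re 0 := by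
  have hlin : HasDerivAt (fun z : ℂ => 1 + z * c) c 0 := by
    simpa using ((hasDerivAt_id (0 : ℂ)).mul_const c).const_add 1
  have hlog := (hlin.clog (by simp)).real_of_complex
  simpa only [Complex.log_re, zero_mul, add_zero, div_one] using hlog

lemma tendsto_log_norm_one_add_sin_sq_mul_div_sq (c : ℂ) :
    Tendsto (fun t : ℝ => Real.log ‖1 + (Real.sin t : ℂ) ^ 2 * c‖ / t ^ 2)
      (𝓝[>] 0) (𝓝 c.re) := by
  have hslope : Tendsto (fun s : ℝ => Real.log ‖1 + s * c‖ / s) (𝓝[≠] 0) (𝓝 c.re) := by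
    refine (hasDerivAt_log_norm_one_add_mul c).tendsto_slope_zero.congr fun s => ?_
    simp [div_eq_inv_mul]
  have hsin_pos : ∀ᶠ t in 𝓝[>] (0 : ℝ), 0 < Real.sin t :=
    eventually_of_mem (Ioo_mem_nhdsGT Real.pi_pos) fun t ht =>
      Real.sin_pos_of_pos_of_lt_pi ht.1 ht.2
  have hsin_sq : Tendsto (fun t : ℝ => Real.sin t ^ 2) (𝓝[>] 0) (𝓝[≠] 0) := by
    refine tendsto_nhdsWithin_iff.mpr ⟨?_, hsin_pos.mono fun t ht => (pow_pos ht 2).ne'⟩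
    have hc : Continuous fun t : ℝ => Real.sin t ^ 2 := by fun_prop
    exact (hc.tendsto' 0 0 (by simp)).mono_left nhdsWithin_le_nhds
  have hsinc : Tendsto (fun t : ℝ => Real.sinc t ^ 2) (𝓝[>] 0) (𝓝 1) := by
    have hc : Continuous fun t : ℝ => Real.sinc t ^ 2 := Real.continuous_sinc.pow 2
    exact (hc.tendsto' 0 1 (by simp [Real.sinc_zero])).mono_left nhdsWithin_le_nhds
  have hprod := (hslope.comp hsin_sq).mul hsinc
  rw [mul_one] at hprod
  refine hprod.congr' ?_
  filter_upwards [hsin_pos, self_mem_nhdsWithin] with t hs (ht : 0 < t)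
  rw [Function.comp_apply, Real.sinc_of_ne_zero ht.ne']
  push_cast
  field_simp

section FubiniStudy

variable {m : ℕ}

lemma herm_eq_inner (w z : EuclideanSpace ℂ (Fin m)) : herm w z = ⟪z, w⟫_ℂ := by
  simp only [herm, PiLp.inner_apply, RCLike.inner_apply]

lemma fsDist_nonneg (p q : EuclideanSpace ℂ (Fin m)) : 0 ≤ fsDist p q :=
  Real.arccos_nonneg _

lemma cos_fsDist (p q : EuclideanSpace ℂ (Fin m)) :
    Real.cos (fsDist p q) = ‖⟪p, q⟫_ℂ‖ / (‖p‖ * ‖q‖) := by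
  rw [fsDist, herm_eq_inner, norm_inner_symm]
  refine Real.cos_arccos ?_ (div_le_one_of_le₀ (norm_inner_le_norm p q) (by positivity))
  linarith [show 0 ≤ ‖⟪p, q⟫_ℂ‖ / (‖p‖ * ‖q‖) by positivity]

variable {p q z : EuclideanSpace ℂ (Fin m)}

lemma inner_ne_zero_of_fsDist_lt (h : fsDist p q < Real.pi / 2) : ⟪p, q⟫_ℂ ≠ 0 := by
  have hcos : 0 < Real.cos (fsDist p q) :=
    Real.cos_pos_of_mem_Ioo ⟨by linarith [fsDist_nonneg p q, Real.pi_pos], h⟩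
  intro h0
  rw [cos_fsDist, h0, norm_zero, zero_div] at hcos
  exact hcos.false

lemma left_ne_zero_of_fsDist_lt (h : fsDist p q < Real.pi / 2) : p ≠ 0 := by
  rintro rfl
  exact inner_ne_zero_of_fsDist_lt h (inner_zero_left q)

lemma inner_div_smul_sub_inv_smul_eq_zero (h : ⟪p, q⟫_ℂ ≠ 0) :
    ⟪p, ((‖p‖ : ℂ) / ⟪p, q⟫_ℂ) • q - (‖p‖ : ℂ)⁻¹ • p⟫_ℂ = 0 := by
  rcases eq_or_ne p 0 with rfl | hp
  · simp
  have hp' : (‖p‖ : ℂ) ≠ 0 := by exact_mod_cast norm_ne_zero_iff.mpr hp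
  rw [inner_sub_right, inner_smul_right, inner_smul_right, inner_self_eq_norm_sq_to_K]
  field_simp
  simp

lemma inner_inv_norm_smul_gammaDir (h : fsDist p q < Real.pi / 2) :
    ⟪(‖p‖ : ℂ)⁻¹ • p, gammaDir p q⟫_ℂ = 0 := by
  rw [gammaDir, inner_smul_right, inner_smul_left, herm_eq_inner,
    inner_div_smul_sub_inv_smul_eq_zero (inner_ne_zero_of_fsDist_lt h), mul_zero, mul_zero]

lemma norm_gammaDir (h0 : 0 < fsDist p q) (h2 : fsDist p q < Real.pi / 2) :
    ‖gammaDir p q‖ = 1 := by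
  have hk := inner_ne_zero_of_fsDist_lt h2
  have hp := left_ne_zero_of_fsDist_lt h2
  have hsin : Real.sin (fsDist p q) ≠ 0 :=
    (Real.sin_pos_of_pos_of_lt_pi h0 (by linarith [Real.pi_pos])).ne'
  have hcos : Real.cos (fsDist p q) ≠ 0 :=
    (Real.cos_pos_of_mem_Ioo ⟨by linarith [Real.pi_pos], h2⟩).ne'
  set v := ((‖p‖ : ℂ) / ⟪p, q⟫_ℂ) • q - (‖p‖ : ℂ)⁻¹ • p
  have horth : ⟪(‖p‖ : ℂ)⁻¹ • p, v⟫_ℂ = 0 := by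
    rw [inner_smul_left, inner_div_smul_sub_inv_smul_eq_zero hk, mul_zero]
  -- Pythagoras for `(‖p‖ / ⟪p, q⟫) • q = ‖p‖⁻¹ • p + v` gives `‖v‖² = 1 / cos² d - 1`.
  have hpyth := norm_add_sq_eq_norm_sq_add_norm_sq_of_inner_eq_zero _ _ horth
  rw [add_sub_cancel, norm_inv_norm_smul_self hp, norm_smul, norm_div, Complex.norm_real,
    Real.norm_of_nonneg (norm_nonneg p)] at hpyth
  have hv : ‖v‖ ^ 2 = 1 / Real.cos (fsDist p q) ^ 2 - 1 := by
    have hk' : ‖⟪p, q⟫_ℂ‖ ≠ 0 := norm_ne_zero_iff.mpr hk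
    rw [cos_fsDist, div_pow, one_div_div, eq_sub_iff_add_eq, eq_div_iff (pow_ne_zero 2 hk')]
    field_simp at hpyth
    linear_combination -hpyth
  rw [gammaDir, herm_eq_inner, norm_smul, Complex.norm_real, Real.norm_eq_abs]
  refine (pow_eq_one_iff_of_nonneg (by positivity) two_ne_zero).mp ?_
  rw [mul_pow, sq_abs, hv, Real.cot_eq_cos_div_sin]
  field_simp
  linarith [Real.sin_sq_add_cos_sq (fsDist p q)]

lemma norm_geo (h0 : 0 < fsDist p z) (h2 : fsDist p z < Real.pi / 2) (t : ℝ) :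
    ‖geo t p z‖ = 1 :=
  norm_cos_smul_add_sin_smul (norm_inv_norm_smul_self (left_ne_zero_of_fsDist_lt h2))
    (norm_gammaDir h0 h2) (inner_inv_norm_smul_gammaDir h2) t

lemma herm_geo_alphaV_mul_herm_geo_betaV (hq : fsDist p q < Real.pi / 2)
    (hz : fsDist p z < Real.pi / 2) (t : ℝ) :
    herm (geo t p z) (alphaV p q) * herm (geo t p z) (betaV p q) =
      (1 + (Real.sin t : ℂ) ^ 2 * (herm (gammaDir p z) (gammaDir p q) ^ 2 - 1)) / 2 := by
  simp only [herm_eq_inner]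
  exact inner_add_I_smul_mul_inner_sub_I_smul
    (norm_inv_norm_smul_self (left_ne_zero_of_fsDist_lt hq))
    (inner_inv_norm_smul_gammaDir hq) (inner_inv_norm_smul_gammaDir hz) t

lemma muW_geo (hq : fsDist p q < Real.pi / 2) (hz0 : 0 < fsDist p z)
    (hz2 : fsDist p z < Real.pi / 2) (t : ℝ) :
    muW p q (geo t p z) = -(1 / 2) *
      Real.log ‖1 + (Real.sin t : ℂ) ^ 2 * (herm (gammaDir p z) (gammaDir p q) ^ 2 - 1)‖ := by
  rw [muW, norm_geo hz0 hz2, one_pow, div_one, mul_assoc, ← norm_mul,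
    herm_geo_alphaV_mul_herm_geo_betaV hq hz2, norm_div, Complex.norm_two,
    mul_div_cancel₀ _ two_ne_zero]

end FubiniStudy

theorem stmt11_general {n : ℕ} (p q z : EuclideanSpace ℂ (Fin (n + 1)))
    (hd2 : fsDist p q < Real.pi / 2)
    (hz0 : 0 < fsDist p z) (hz2 : fsDist p z < Real.pi / 2) :
    (∃ ε > 0, ∀ t : ℝ, 0 < t → t < ε →
        herm (geo t p z) (alphaV p q) ≠ 0 ∧ herm (geo t p z) (betaV p q) ≠ 0) ∧
    Filter.Tendsto (fun t : ℝ => muW p q (geo t p z) / t ^ 2)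
      (nhdsWithin 0 (Set.Ioi 0))
      (nhds ((1 / 2 : ℝ) * (1 - ((herm (gammaDir p z) (gammaDir p q)) ^ 2).re))) := by
  set c := herm (gammaDir p z) (gammaDir p q) ^ 2 - 1
  refine ⟨?_, ?_⟩
  · have hc : Continuous fun t : ℝ => 1 + (Real.sin t : ℂ) ^ 2 * c := by fun_prop
    have hne : ∀ᶠ t in 𝓝 (0 : ℝ), 1 + (Real.sin t : ℂ) ^ 2 * c ≠ 0 :=
      hc.continuousAt.eventually_ne (by simp)
    obtain ⟨ε, hε, hne⟩ := Metric.eventually_nhds_iff.mp hne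
    refine ⟨ε, hε, fun t ht htε => ?_⟩
    rw [← mul_ne_zero_iff, herm_geo_alphaV_mul_herm_geo_betaV hd2 hz2]
    exact div_ne_zero (hne (by rwa [Real.dist_0_eq_abs, abs_of_pos ht])) two_ne_zero
  · have hlim := (tendsto_log_norm_one_add_sin_sq_mul_div_sq c).const_mul (-(1 / 2))
    convert hlim using 2 with t
    · rw [muW_geo hd2 hz0 hz2, mul_div_assoc]
    · rw [Complex.sub_re, Complex.one_re]
      ring

theorem stmt11 {n : ℕ} (p q z : EuclideanSpace ℂ (Fin (n + 1)))
    (hp : p ≠ 0) (hq : q ≠ 0) (hz : z ≠ 0)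
    (hd0 : 0 < fsDist p q) (hd2 : fsDist p q < Real.pi / 2)
    (hz0 : 0 < fsDist p z) (hz2 : fsDist p z < Real.pi / 2) :
    (∃ ε > 0, ∀ t : ℝ, 0 < t → t < ε →
        herm (geo t p z) (alphaV p q) ≠ 0 ∧ herm (geo t p z) (betaV p q) ≠ 0) ∧
    Filter.Tendsto (fun t : ℝ => muW p q (geo t p z) / t ^ 2)
      (nhdsWithin 0 (Set.Ioi 0))
      (nhds ((1 / 2 : ℝ) * (1 - ((herm (gammaDir p z) (gammaDir p q)) ^ 2).re))) :=
  stmt11_general p q z hd2 hz0 hz2
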